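/- For all integers k ≥ 0 and j ≥ 0, let g_1 = z · (x + y − k·z) · ∏_{s=−j}^{k+j} (x − s·z)(y − s·z) ∈ S, the defining polynomial of the cone over the arrangement A_1 obtained from the grid by adding the diagonal line H_1 : x+y = k·z. Then D_0(g_1) is a free S-module of rank 2 admitting a basis consisting of one derivation homogeneous of degree k+2j+1 and one derivation homogeneous of degree k+2j+2. (Equivalently, F_1 := T_{A_1}(k+2j+1) ≅ O_{ℙ²} ⊕ O_{ℙ²}(−1).) -/

import Mathlib

open MvPolynomial

noncomputable section

abbrev S := MvPolynomial (Fin 3) ℝ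

/-- The module of logarithmic derivations annihilating `f`. -/
def D0 (f : S) : Submodule S (Derivation ℝ S S) where
  carrier := {θ | θ f = 0}
  add_mem' := by
    intro a b ha hb
    simp only [Set.mem_setOf_eq] at *
    simp [ha, hb]
  zero_mem' := by simp
  smul_mem' := by
    intro c θ hθ
    simp only [Set.mem_setOf_eq] at *
    simp [hθ]

/-- A derivation is homogeneous of degree `d` if its values on the variables are
homogeneous of degree `d`. -/
def IsHomogDer (θ : Derivation ℝ S S) (d : ℕ) : Prop :=
  ∀ i : Fin 3, (θ (X i)).IsHomogeneous d


/-- Defining polynomial of the cone over the arrangement `A_1`: the grid plus the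
diagonal line `x + y = k·z`. -/
def g1Poly (j k : ℕ) : S :=
  X 2 * (X 0 + X 1 - C (k : ℝ) * X 2) *
    ∏ s ∈ Finset.Icc (-(j : ℤ)) ((k : ℤ) + j),
      ((X 0 - C (s : ℝ) * X 2) * (X 1 - C (s : ℝ) * X 2))

/-!
Write `P = ∏ (x - s z)`, `Q = ∏ (y - s z)` and `L = x + y - k z`, so that
`g₁ = z · L · P · Q`. Since `x - s z ≡ -(y - (k - s) z)` modulo `L` and `s ↦ k - s` permutes the
grid range, `L ∣ P + (-1)^k Q`. Hence `η = P ∂ₓ + (-1)^k Q ∂_y` and `ζ = L Q ∂_y`, like the Euler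
derivation `E`, satisfy `α ∣ θ α` for every linear factor `α` of `g₁`.

Conversely, if `g₁ ∣ δ g₁`, then `α ∣ δ α` for every factor, because the factors are pairwise
non-associated primes. Peeling off `z`, then the lines `x = s z`, the lines `y = s z` and finally
`L` writes `δ` as an `S`-combination of `E`, `η`, `ζ`, and these three are independent.
Since `E g₁ = (deg g₁) g₁`, subtracting suitable multiples of `E` from `η` and `ζ` gives
homogeneous derivations `θ₁`, `θ₂` that annihilate `g₁` and form a basis of `D₀(g₁)`.
-/

namespace Derivation

variable {R A : Type*} [CommRing R] [CommRing A] [Algebra R A] (D : Derivation R A A)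

/-- The Darboux elements of `D`, i.e. those `a` with `a ∣ D a`. -/
def darbouxSubmonoid : Submonoid A where
  carrier := {a | a ∣ D a}
  one_mem' := by simp
  mul_mem' {a b} ha hb := by
    obtain ⟨c, hc⟩ := ha
    obtain ⟨d, hd⟩ := hb
    refine ⟨d + c, ?_⟩
    change D (a * b) = _
    rw [leibniz, smul_eq_mul, smul_eq_mul, hc, hd]
    ring

theorem mem_darbouxSubmonoid {a : A} : a ∈ D.darbouxSubmonoid ↔ a ∣ D a := Iff.rfl

variable {D} in
theorem dvd_apply_of_mul_dvd_apply_mul {a b : A} (ha : Prime a) (hab : ¬ a ∣ b)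
    (h : a * b ∣ D (a * b)) : a ∣ D a := by
  rw [leibniz, smul_eq_mul, smul_eq_mul] at h
  have : a ∣ b * D a := (dvd_add_right (dvd_mul_right a _)).1 ((dvd_mul_right a b).trans h)
  exact (ha.dvd_or_dvd this).resolve_left hab

end Derivation

namespace MvPolynomial

section CommRing

variable {σ R : Type*} [CommRing R]

theorem not_dvd_of_eval_eq_zero {p q : MvPolynomial σ R} (v : σ → R) (hp : eval v p = 0)
    (hq : eval v q ≠ 0) : ¬ p ∣ q := by
  rintro ⟨r, rfl⟩
  exact hq (by rw [map_mul, hp, zero_mul])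

attribute [local instance] MvPolynomial.gradedAlgebra in
theorem IsHomogeneous.of_mul_left [IsDomain R] {φ ψ : MvPolynomial σ R} {m n : ℕ}
    (hφ : φ.IsHomogeneous m) (hφ0 : φ ≠ 0) (h : (φ * ψ).IsHomogeneous (m + n)) :
    ψ.IsHomogeneous n := by
  have hcomp (i : ℕ) :
      homogeneousComponent (m + i) (φ * ψ) = φ * homogeneousComponent i ψ := by
    rw [← decomposition.decompose'_apply, ← decomposition.decompose'_apply]
    exact DirectSum.coe_decompose_mul_add_of_left_mem (homogeneousSubmodule σ R)
      ((mem_homogeneousSubmodule _ _).2 hφ)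
  have hvanish (i : ℕ) (hi : i ≠ n) : homogeneousComponent i ψ = 0 := by
    have := hcomp i
    rw [homogeneousComponent_of_mem h, if_neg (by omega)] at this
    exact (mul_eq_zero.1 this.symm).resolve_left hφ0
  suffices homogeneousComponent n ψ = ψ from this ▸ homogeneousComponent_isHomogeneous n ψ
  conv_rhs => rw [← sum_homogeneousComponent ψ]
  rw [Finset.sum_eq_single n (fun i _ hi => hvanish i hi)]
  intro hn
  exact homogeneousComponent_eq_zero _ _ (by simpa using hn)

variable (σ R) in
def eulerDerivation : Derivation R (MvPolynomial σ R) (MvPolynomial σ R) := mkDerivation R X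

@[simp] theorem eulerDerivation_X (i : σ) : eulerDerivation σ R (X i) = X i :=
  mkDerivation_X _ _ _

variable [Fintype σ]

theorem derivation_apply_eq_sum (D : Derivation R (MvPolynomial σ R) (MvPolynomial σ R))
    (φ : MvPolynomial σ R) : D φ = ∑ i, D (X i) * pderiv i φ := by
  classical
  have sum_apply (ψ : MvPolynomial σ R) :
      (∑ i, D (X i) • pderiv i) ψ = ∑ i, D (X i) * pderiv i ψ := by
    rw [← Derivation.coeFnAddMonoidHom_apply, map_sum, Finset.sum_apply]
    rfl
  have : D = ∑ i, D (X i) • pderiv i :=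
    derivation_ext fun j => by simp [sum_apply, pderiv_X, Pi.single_apply]
  conv_lhs => rw [this]
  exact sum_apply φ

theorem IsHomogeneous.derivation_apply
    {D : Derivation R (MvPolynomial σ R) (MvPolynomial σ R)} {d n : ℕ}
    (hD : ∀ i, (D (X i)).IsHomogeneous d) {φ : MvPolynomial σ R} (hφ : φ.IsHomogeneous n) :
    (D φ).IsHomogeneous (d + (n - 1)) := by
  rw [derivation_apply_eq_sum]
  exact IsHomogeneous.sum _ _ _ fun i _ => (hD i).mul hφ.pderiv

theorem IsHomogeneous.eulerDerivation_apply {φ : MvPolynomial σ R} {n : ℕ}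
    (hφ : φ.IsHomogeneous n) : eulerDerivation σ R φ = C (n : R) * φ := by
  rw [derivation_apply_eq_sum, map_natCast, ← nsmul_eq_mul, ← hφ.sum_X_mul_pderiv]
  exact Finset.sum_congr rfl fun i _ => by rw [eulerDerivation_X]

theorem IsHomogeneous.of_derivation_apply_eq_mul [IsDomain R]
    {D : Derivation R (MvPolynomial σ R) (MvPolynomial σ R)} {f q : MvPolynomial σ R} {d m : ℕ}
    (hD : ∀ i, (D (X i)).IsHomogeneous (d + 1)) (hf : f.IsHomogeneous (m + 1)) (hf0 : f ≠ 0)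
    (hq : D f = q * f) : q.IsHomogeneous d := by
  refine hf.of_mul_left hf0 ?_
  rw [mul_comm, ← hq]
  convert hf.derivation_apply hD using 1
  omega

theorem eq_zero_of_smul_eulerDerivation_apply_eq_zero [IsDomain R] [CharZero R]
    {f r : MvPolynomial σ R} {m : ℕ} (hf : f.IsHomogeneous (m + 1)) (hf0 : f ≠ 0)
    (h : (r • eulerDerivation σ R) f = 0) : r = 0 := by
  rw [Derivation.smul_apply, hf.eulerDerivation_apply, smul_eq_mul] at h
  have hm : (C ((m + 1 : ℕ) : R) : MvPolynomial σ R) ≠ 0 :=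
    C_ne_zero.2 (Nat.cast_ne_zero.2 m.succ_ne_zero)
  exact (mul_eq_zero.1 h).resolve_right (mul_ne_zero hm hf0)

end CommRing

section Field

variable {σ K : Type*} [Field K]

theorem prime_of_isHomogeneous_one {φ : MvPolynomial σ K} (hφ : φ.IsHomogeneous 1)
    (h0 : φ ≠ 0) : Prime φ := by
  refine UniqueFactorizationMonoid.irreducible_iff_prime.1
    (irreducible_of_totalDegree_eq_one (hφ.totalDegree h0) fun x hx => ?_)
  obtain ⟨d, hd⟩ := ne_zero_iff.1 h0
  exact isUnit_iff_ne_zero.2 fun hx0 => hd (zero_dvd_iff.1 (hx0 ▸ hx d))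

variable [Fintype σ] [CharZero K]

theorem exists_sub_smul_eulerDerivation_apply_eq_zero
    {D : Derivation K (MvPolynomial σ K) (MvPolynomial σ K)} {f : MvPolynomial σ K} {d m : ℕ}
    (hD : ∀ i, (D (X i)).IsHomogeneous (d + 1)) (hf : f.IsHomogeneous (m + 1)) (hf0 : f ≠ 0)
    (hdvd : f ∣ D f) :
    ∃ q : MvPolynomial σ K, (D - q • eulerDerivation σ K) f = 0 ∧
      ∀ i, ((D - q • eulerDerivation σ K) (X i)).IsHomogeneous (d + 1) := by
  obtain ⟨q, hq⟩ := hdvd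
  have hq_hom : q.IsHomogeneous d := hf.of_derivation_apply_eq_mul hD hf0 (by rw [hq, mul_comm])
  have hm : ((m + 1 : ℕ) : K) ≠ 0 := Nat.cast_ne_zero.2 m.succ_ne_zero
  refine ⟨C ((m + 1 : ℕ) : K)⁻¹ * q, ?_, fun i => ?_⟩
  · have hC : C ((m + 1 : ℕ) : K)⁻¹ * C ((m + 1 : ℕ) : K) = (1 : MvPolynomial σ K) := by
      rw [← C_mul, inv_mul_cancel₀ hm, C_1]
    rw [Derivation.sub_apply, Derivation.smul_apply, hf.eulerDerivation_apply, hq, smul_eq_mul]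
    linear_combination (-(f * q)) * hC
  · rw [Derivation.sub_apply, Derivation.smul_apply, eulerDerivation_X, smul_eq_mul, mul_assoc]
    exact (hD i).sub ((hq_hom.mul (isHomogeneous_X K i)).C_mul _)

end Field

end MvPolynomial

namespace GridArrangement

open MvPolynomial Finset

def xForm (s : ℤ) : S := X 0 - C (s : ℝ) * X 2
def yForm (s : ℤ) : S := X 1 - C (s : ℝ) * X 2
def diagForm (k : ℕ) : S := X 0 + X 1 - C (k : ℝ) * X 2

@[simp] theorem eval_xForm (v : Fin 3 → ℝ) (s : ℤ) : eval v (xForm s) = v 0 - s * v 2 := by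
  simp [xForm]

@[simp] theorem eval_yForm (v : Fin 3 → ℝ) (s : ℤ) : eval v (yForm s) = v 1 - s * v 2 := by
  simp [yForm]

@[simp] theorem eval_diagForm (v : Fin 3 → ℝ) (k : ℕ) :
    eval v (diagForm k) = v 0 + v 1 - k * v 2 := by
  simp [diagForm]

theorem derivation_xForm (D : Derivation ℝ S S) (s : ℤ) :
    D (xForm s) = D (X 0) - C (s : ℝ) * D (X 2) := by
  rw [xForm, map_sub, C_mul', D.map_smul, smul_eq_C_mul]

theorem derivation_yForm (D : Derivation ℝ S S) (s : ℤ) :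
    D (yForm s) = D (X 1) - C (s : ℝ) * D (X 2) := by
  rw [yForm, map_sub, C_mul', D.map_smul, smul_eq_C_mul]

theorem derivation_diagForm (D : Derivation ℝ S S) (k : ℕ) :
    D (diagForm k) = D (X 0) + D (X 1) - C (k : ℝ) * D (X 2) := by
  rw [diagForm, map_sub, map_add, C_mul', D.map_smul, smul_eq_C_mul]

theorem isHomogeneous_xForm (s : ℤ) : (xForm s).IsHomogeneous 1 :=
  (isHomogeneous_X _ _).sub (isHomogeneous_C_mul_X _ _)

theorem isHomogeneous_yForm (s : ℤ) : (yForm s).IsHomogeneous 1 :=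
  (isHomogeneous_X _ _).sub (isHomogeneous_C_mul_X _ _)

theorem isHomogeneous_diagForm (k : ℕ) : (diagForm k).IsHomogeneous 1 :=
  ((isHomogeneous_X _ _).add (isHomogeneous_X _ _)).sub (isHomogeneous_C_mul_X _ _)

theorem prime_xForm (s : ℤ) : Prime (xForm s) :=
  prime_of_isHomogeneous_one (isHomogeneous_xForm s) (ne_of_apply_ne (eval ![1, 0, 0]) (by simp))

theorem prime_yForm (s : ℤ) : Prime (yForm s) :=
  prime_of_isHomogeneous_one (isHomogeneous_yForm s) (ne_of_apply_ne (eval ![0, 1, 0]) (by simp))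

theorem prime_diagForm (k : ℕ) : Prime (diagForm k) :=
  prime_of_isHomogeneous_one (isHomogeneous_diagForm k)
    (ne_of_apply_ne (eval ![1, 0, 0]) (by simp))

variable (k j : ℕ)

def gridRange : Finset ℤ := Icc (-(j : ℤ)) (k + j)

def xProd : S := ∏ s ∈ gridRange k j, xForm s
def yProd : S := ∏ s ∈ gridRange k j, yForm s

variable {k j} in
theorem bounds_of_mem_gridRange {s : ℤ} (hs : s ∈ gridRange k j) :
    -(j : ℝ) ≤ s ∧ (s : ℝ) ≤ k + j := by
  simp only [gridRange, mem_Icc] at hs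
  exact ⟨by exact_mod_cast hs.1, by exact_mod_cast hs.2⟩

theorem card_gridRange : #(gridRange k j) = k + 2 * j + 1 := by
  simp only [gridRange, Int.card_Icc]
  omega

theorem g1Poly_eq_prod :
    g1Poly j k = X 2 * diagForm k * ∏ s ∈ gridRange k j, (xForm s * yForm s) := rfl

theorem g1Poly_eq : g1Poly j k = X 2 * diagForm k * (xProd k j * yProd k j) := by
  rw [g1Poly_eq_prod, xProd, yProd, prod_mul_distrib]

theorem isHomogeneous_xProd : (xProd k j).IsHomogeneous (k + 2 * j + 1) := by
  simpa [xProd, card_gridRange] using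
    IsHomogeneous.prod (gridRange k j) _ (fun _ => 1) fun s _ => isHomogeneous_xForm s

theorem isHomogeneous_yProd : (yProd k j).IsHomogeneous (k + 2 * j + 1) := by
  simpa [yProd, card_gridRange] using
    IsHomogeneous.prod (gridRange k j) _ (fun _ => 1) fun s _ => isHomogeneous_yForm s

theorem isHomogeneous_g1Poly : (g1Poly j k).IsHomogeneous (2 * k + 4 * j + 3 + 1) := by
  rw [g1Poly_eq]
  convert ((isHomogeneous_X ℝ 2).mul (isHomogeneous_diagForm k)).mul
    ((isHomogeneous_xProd k j).mul (isHomogeneous_yProd k j)) using 1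
  ring

theorem xProd_ne_zero : xProd k j ≠ 0 :=
  prod_ne_zero_iff.2 fun s _ => (prime_xForm s).ne_zero

theorem yProd_ne_zero : yProd k j ≠ 0 :=
  prod_ne_zero_iff.2 fun s _ => (prime_yForm s).ne_zero

theorem g1Poly_ne_zero : g1Poly j k ≠ 0 := by
  rw [g1Poly_eq]
  exact mul_ne_zero (mul_ne_zero X_prime.ne_zero (prime_diagForm k).ne_zero)
    (mul_ne_zero (xProd_ne_zero k j) (yProd_ne_zero k j))

theorem diagForm_dvd_xProd_add_yProd : diagForm k ∣ xProd k j + C ((-1) ^ k) * yProd k j := by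
  have hmod : ∀ s ∈ gridRange k j,
      xForm s ≡ -yForm (k - s) [SMOD Ideal.span {diagForm k}] := fun s _ =>
    SModEq.sub_mem.2 (Ideal.mem_span_singleton.2 ⟨1, by simp [xForm, yForm, diagForm]; ring⟩)
  have hreflect :
      ∏ s ∈ gridRange k j, -yForm (k - s) = C ((-1) ^ (k + 2 * j + 1)) * yProd k j := by
    rw [prod_neg, card_gridRange, map_pow, map_neg, map_one, yProd]
    congr 1
    refine prod_nbij' (fun s => k - s) (fun s => k - s) ?_ ?_ ?_ ?_ ?_ <;>
      simp [gridRange] <;> omega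
  have hsign : (C ((-1 : ℝ) ^ (k + 2 * j + 1)) : S) = -C ((-1) ^ k) := by
    simp [pow_succ, pow_add, pow_mul]
  rw [← Ideal.mem_span_singleton, ← sub_neg_eq_add, ← neg_mul, ← hsign, ← hreflect,
    ← SModEq.sub_mem]
  exact SModEq.prod hmod

theorem not_diagForm_dvd_yProd : ¬ diagForm k ∣ yProd k j := by
  refine not_dvd_of_eval_eq_zero ![k + j + 1, -j - 1, 1] (by simp) ?_
  simp only [yProd, eval_prod, eval_yForm, Matrix.cons_val, mul_one]
  exact prod_ne_zero_iff.2 fun s hs => ne_of_lt (by linarith [(bounds_of_mem_gridRange hs).1])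

def eta : Derivation ℝ S S := mkDerivation ℝ ![xProd k j, C ((-1) ^ k) * yProd k j, 0]
def zeta : Derivation ℝ S S := mkDerivation ℝ ![0, diagForm k * yProd k j, 0]

@[simp] theorem eta_X_zero : eta k j (X 0) = xProd k j := mkDerivation_X _ _ _
@[simp] theorem eta_X_one : eta k j (X 1) = C ((-1) ^ k) * yProd k j := mkDerivation_X _ _ _
@[simp] theorem eta_X_two : eta k j (X 2) = 0 := mkDerivation_X _ _ _
@[simp] theorem zeta_X_zero : zeta k j (X 0) = 0 := mkDerivation_X _ _ _
@[simp] theorem zeta_X_one : zeta k j (X 1) = diagForm k * yProd k j := mkDerivation_X _ _ _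
@[simp] theorem zeta_X_two : zeta k j (X 2) = 0 := mkDerivation_X _ _ _

theorem isHomogeneous_eta : ∀ i, (eta k j (X i)).IsHomogeneous (k + 2 * j + 1)
  | 0 => by rw [eta_X_zero]; exact isHomogeneous_xProd k j
  | 1 => by rw [eta_X_one]; exact (isHomogeneous_yProd k j).C_mul _
  | 2 => by rw [eta_X_two]; exact isHomogeneous_zero _ _ _

theorem isHomogeneous_zeta : ∀ i, (zeta k j (X i)).IsHomogeneous (k + 2 * j + 1 + 1)
  | 0 => by rw [zeta_X_zero]; exact isHomogeneous_zero _ _ _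
  | 1 => by
    rw [zeta_X_one, add_comm]
    exact (isHomogeneous_diagForm k).mul (isHomogeneous_yProd k j)
  | 2 => by rw [zeta_X_two]; exact isHomogeneous_zero _ _ _

theorem g1Poly_mem_darbouxSubmonoid_eta : g1Poly j k ∈ (eta k j).darbouxSubmonoid := by
  rw [g1Poly_eq_prod]
  refine mul_mem (mul_mem ?_ ?_) (prod_mem fun s hs => mul_mem ?_ ?_) <;>
    simp only [Derivation.mem_darbouxSubmonoid, derivation_xForm, derivation_yForm,
      derivation_diagForm, eta_X_zero, eta_X_one, eta_X_two, mul_zero, sub_zero]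
  · exact dvd_zero _
  · exact diagForm_dvd_xProd_add_yProd k j
  · exact dvd_prod_of_mem _ hs
  · exact (dvd_prod_of_mem _ hs).mul_left _

theorem g1Poly_mem_darbouxSubmonoid_zeta : g1Poly j k ∈ (zeta k j).darbouxSubmonoid := by
  rw [g1Poly_eq_prod]
  refine mul_mem (mul_mem ?_ ?_) (prod_mem fun s hs => mul_mem ?_ ?_) <;>
    simp only [Derivation.mem_darbouxSubmonoid, derivation_xForm, derivation_yForm,
      derivation_diagForm, zeta_X_zero, zeta_X_one, zeta_X_two, mul_zero, sub_zero, zero_add]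
  · exact dvd_zero _
  · exact dvd_mul_right _ _
  · exact dvd_zero _
  · exact (dvd_prod_of_mem _ hs).mul_left _

theorem xProd_dvd_of_forall {a : S} (h : ∀ s ∈ gridRange k j, xForm s ∣ a) : xProd k j ∣ a := by
  refine prod_dvd_of_isRelPrime (fun s _ t _ hst => ?_) h
  refine (prime_xForm s).irreducible.isRelPrime_iff_not_dvd.2
    (not_dvd_of_eval_eq_zero ![s, 0, 1] (by simp) ?_)
  simpa [sub_eq_zero] using hst

theorem yProd_dvd_of_forall {a : S} (h : ∀ s ∈ gridRange k j, yForm s ∣ a) : yProd k j ∣ a := by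
  refine prod_dvd_of_isRelPrime (fun s _ t _ hst => ?_) h
  refine (prime_yForm s).irreducible.isRelPrime_iff_not_dvd.2
    (not_dvd_of_eval_eq_zero ![0, s, 1] (by simp) ?_)
  simpa [sub_eq_zero] using hst

section Logarithmic

variable {k j} {δ : Derivation ℝ S S}

/- In the next four lemmas the cofactor of the line is nonzero at a point of the line,
hence not divisible by it. -/

theorem X_two_dvd_apply (hδ : g1Poly j k ∣ δ (g1Poly j k)) : X 2 ∣ δ (X 2) := by
  rw [g1Poly_eq, mul_assoc] at hδ
  refine δ.dvd_apply_of_mul_dvd_apply_mul X_prime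
    (not_dvd_of_eval_eq_zero ![1, 1, 0] (by simp) ?_) hδ
  simp [xProd, yProd]

theorem diagForm_dvd_apply (hδ : g1Poly j k ∣ δ (g1Poly j k)) :
    diagForm k ∣ δ (diagForm k) := by
  have hF : g1Poly j k = diagForm k * (X 2 * (xProd k j * yProd k j)) := by
    rw [g1Poly_eq]; ring
  rw [hF] at hδ
  refine δ.dvd_apply_of_mul_dvd_apply_mul (prime_diagForm k)
    (not_dvd_of_eval_eq_zero ![k + j + 1, -j - 1, 1] (by simp) ?_) hδ
  simp only [map_mul, eval_X, xProd, yProd, eval_prod, eval_xForm, eval_yForm,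
    Matrix.cons_val, one_mul, mul_one]
  refine mul_ne_zero (prod_ne_zero_iff.2 fun s hs => ?_) (prod_ne_zero_iff.2 fun s hs => ?_) <;>
  · obtain ⟨h1, h2⟩ := bounds_of_mem_gridRange hs
    first | exact ne_of_gt (by linarith) | exact ne_of_lt (by linarith)

theorem xForm_dvd_apply (hδ : g1Poly j k ∣ δ (g1Poly j k)) {s : ℤ} (hs : s ∈ gridRange k j) :
    xForm s ∣ δ (xForm s) := by
  have hF : g1Poly j k = xForm s *
      (X 2 * diagForm k * ((∏ t ∈ (gridRange k j).erase s, xForm t) * yProd k j)) := by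
    rw [g1Poly_eq, xProd, ← mul_prod_erase _ _ hs]; ring
  rw [hF] at hδ
  refine δ.dvd_apply_of_mul_dvd_apply_mul (prime_xForm s)
    (not_dvd_of_eval_eq_zero ![s, k + j + 1, 1] (by simp) ?_) hδ
  obtain ⟨h1, h2⟩ := bounds_of_mem_gridRange hs
  simp only [map_mul, eval_X, yProd, eval_prod, eval_xForm, eval_yForm, eval_diagForm,
    Matrix.cons_val, one_mul, mul_one]
  refine mul_ne_zero (ne_of_gt (by linarith)) (mul_ne_zero (prod_ne_zero_iff.2 fun t ht => ?_)
    (prod_ne_zero_iff.2 fun t ht => ?_))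
  · exact sub_ne_zero.2 (Int.cast_injective.ne (ne_of_mem_erase ht).symm)
  · exact ne_of_gt (by linarith [(bounds_of_mem_gridRange ht).2])

theorem yForm_dvd_apply (hδ : g1Poly j k ∣ δ (g1Poly j k)) {s : ℤ} (hs : s ∈ gridRange k j) :
    yForm s ∣ δ (yForm s) := by
  have hF : g1Poly j k = yForm s *
      (X 2 * diagForm k * (xProd k j * ∏ t ∈ (gridRange k j).erase s, yForm t)) := by
    rw [g1Poly_eq, yProd, ← mul_prod_erase _ _ hs]; ring
  rw [hF] at hδ
  refine δ.dvd_apply_of_mul_dvd_apply_mul (prime_yForm s)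
    (not_dvd_of_eval_eq_zero ![-j - 1, s, 1] (by simp) ?_) hδ
  obtain ⟨h1, h2⟩ := bounds_of_mem_gridRange hs
  simp only [map_mul, eval_X, xProd, eval_prod, eval_xForm, eval_yForm, eval_diagForm,
    Matrix.cons_val, one_mul, mul_one]
  refine mul_ne_zero (ne_of_lt (by linarith)) (mul_ne_zero (prod_ne_zero_iff.2 fun t ht => ?_)
    (prod_ne_zero_iff.2 fun t ht => ?_))
  · exact ne_of_lt (by linarith [(bounds_of_mem_gridRange ht).1])
  · exact sub_ne_zero.2 (Int.cast_injective.ne (ne_of_mem_erase ht).symm)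

theorem exists_eq_smul_eulerDerivation_add_smul_eta_add_smul_zeta
    (hδ : g1Poly j k ∣ δ (g1Poly j k)) :
    ∃ p u w : S, δ = p • eulerDerivation (Fin 3) ℝ + u • eta k j + w • zeta k j := by
  obtain ⟨p, hp⟩ := X_two_dvd_apply hδ
  set δ' := δ - p • eulerDerivation (Fin 3) ℝ with hδ'_def
  have hδ' : g1Poly j k ∣ δ' (g1Poly j k) := by
    rw [hδ'_def, Derivation.sub_apply, Derivation.smul_apply,
      (isHomogeneous_g1Poly k j).eulerDerivation_apply, smul_eq_mul]
    exact dvd_sub hδ ((dvd_mul_left _ _).mul_left _)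
  have h2 : δ' (X 2) = 0 := by simp [δ', hp, mul_comm]
  obtain ⟨u, hu⟩ : xProd k j ∣ δ' (X 0) := xProd_dvd_of_forall k j fun s hs => by
    simpa [derivation_xForm, h2] using xForm_dvd_apply hδ' hs
  obtain ⟨v, hv⟩ : yProd k j ∣ δ' (X 1) := yProd_dvd_of_forall k j fun s hs => by
    simpa [derivation_yForm, h2] using yForm_dvd_apply hδ' hs
  have hL : diagForm k ∣ yProd k j * (v - C ((-1) ^ k) * u) := by
    have h := dvd_sub (diagForm_dvd_apply hδ') ((diagForm_dvd_xProd_add_yProd k j).mul_right u)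
    rw [derivation_diagForm, h2, hu, hv] at h
    convert h using 1
    ring
  obtain ⟨w, hw⟩ := ((prime_diagForm k).dvd_or_dvd hL).resolve_left (not_diagForm_dvd_yProd k j)
  refine ⟨p, u, w, derivation_ext fun i => ?_⟩
  have hδi : δ (X i) = δ' (X i) + p * X i := by simp [δ']
  simp only [hδi, Derivation.coe_add, Derivation.coe_smul, Pi.add_apply, Pi.smul_apply,
    eulerDerivation_X, smul_eq_mul]
  match i with
  | 0 => rw [hu, eta_X_zero, zeta_X_zero]; ring
  | 1 => rw [hv, eta_X_one, zeta_X_one]; linear_combination yProd k j * hw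
  | 2 => rw [h2, eta_X_two, zeta_X_two]; ring

end Logarithmic

theorem eq_zero_of_smul_eulerDerivation_add_smul_eta_add_smul_zeta_eq_zero {p u w : S}
    (h : p • eulerDerivation (Fin 3) ℝ + u • eta k j + w • zeta k j = 0) :
    p = 0 ∧ u = 0 ∧ w = 0 := by
  have hX (i : Fin 3) := congrArg (fun D : Derivation ℝ S S => D (X i)) h
  have hp : p = 0 := by simpa [X_prime.ne_zero] using hX 2
  have hu : u = 0 := by simpa [hp, xProd_ne_zero] using hX 0
  have hw : w = 0 := by
    simpa [hp, hu, (prime_diagForm k).ne_zero, yProd_ne_zero] using hX 1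
  exact ⟨hp, hu, hw⟩

theorem eq_of_smul_add_smul_eq_smul_add_smul {a b u w u' w' : S}
    (h : u • (eta k j - a • eulerDerivation (Fin 3) ℝ) +
        w • (zeta k j - b • eulerDerivation (Fin 3) ℝ) =
      u' • (eta k j - a • eulerDerivation (Fin 3) ℝ) +
        w' • (zeta k j - b • eulerDerivation (Fin 3) ℝ)) :
    u = u' ∧ w = w' := by
  have h0 : ((u' - u) * a + (w' - w) * b) • eulerDerivation (Fin 3) ℝ + (u - u') • eta k j +
      (w - w') • zeta k j = 0 := by
    rw [← sub_eq_zero] at h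
    rw [← h]
    module
  obtain ⟨-, hu, hw⟩ := eq_zero_of_smul_eulerDerivation_add_smul_eta_add_smul_zeta_eq_zero k j h0
  exact ⟨sub_eq_zero.1 hu, sub_eq_zero.1 hw⟩

end GridArrangement

/-- `A_1` is free with exponents `(k+2j+1, k+2j+2)`, i.e.
`F_1 = T_{A_1}(k+2j+1) ≃ O ⊕ O(-1)`. -/
theorem grid_plus_one_diagonal_free (k j : ℕ) :
    ∃ θ₁ θ₂ : Derivation ℝ S S,
      θ₁ ∈ D0 (g1Poly j k) ∧ θ₂ ∈ D0 (g1Poly j k) ∧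
      IsHomogDer θ₁ (k + 2 * j + 1) ∧ IsHomogDer θ₂ (k + 2 * j + 2) ∧
      (∀ δ ∈ D0 (g1Poly j k), ∃! p : S × S, p.1 • θ₁ + p.2 • θ₂ = δ) := by
  open GridArrangement in
  have hF := isHomogeneous_g1Poly k j
  have hF0 := g1Poly_ne_zero k j
  obtain ⟨a, ha, ha_hom⟩ := exists_sub_smul_eulerDerivation_apply_eq_zero
    (isHomogeneous_eta k j) hF hF0 (g1Poly_mem_darbouxSubmonoid_eta k j)
  obtain ⟨b, hb, hb_hom⟩ := exists_sub_smul_eulerDerivation_apply_eq_zero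
    (isHomogeneous_zeta k j) hF hF0 (g1Poly_mem_darbouxSubmonoid_zeta k j)
  refine ⟨_, _, ha, hb, ha_hom, hb_hom, fun δ (hδ : δ _ = 0) => ?_⟩
  obtain ⟨p, u, w, rfl⟩ :=
    exists_eq_smul_eulerDerivation_add_smul_eta_add_smul_zeta (hδ ▸ dvd_zero _)
  have hsplit : p • eulerDerivation (Fin 3) ℝ + u • eta k j + w • zeta k j =
      u • (eta k j - a • eulerDerivation (Fin 3) ℝ) +
        w • (zeta k j - b • eulerDerivation (Fin 3) ℝ) +
        (p + u * a + w * b) • eulerDerivation (Fin 3) ℝ := by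
    module
  have hr : p + u * a + w * b = 0 := by
    refine eq_zero_of_smul_eulerDerivation_apply_eq_zero hF hF0 ?_
    rwa [hsplit, Derivation.add_apply, Derivation.add_apply, Derivation.smul_apply,
      Derivation.smul_apply, ha, hb, smul_zero, smul_zero, zero_add, zero_add] at hδ
  rw [hsplit, hr, zero_smul, add_zero]
  exact ⟨(u, w), rfl, fun q hq => Prod.ext_iff.2 (eq_of_smul_add_smul_eq_smul_add_smul k j hq)⟩
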